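/- arXiv:hep-th/9308148 — 2 statements merged into one kernel-verified Lean document; each statement's English description precedes it below -/
import Mathlib

section
/- Let R be an n²×n² matrix over a field k satisfying the quantum Yang–Baxter equation. Then the n⁴×n⁴ multi-index braiding matrix 𝐑 built from R also satisfies the quantum Yang–Baxter equation: 𝐑₁₂𝐑₁₃𝐑₂₃ = 𝐑₂₃𝐑₁₃𝐑₁₂ (as matrices acting on the threefold tensor power of the n²-dimensional multi-index space). -/
open Matrix

/-- `A` acting in the 1st and 2nd tensor factors of the threefold tensor power. -/
def lift12 {k : Type*} [Field k] {ι : Type*} [DecidableEq ι]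
    (A : Matrix (ι × ι) (ι × ι) k) : Matrix (ι × ι × ι) (ι × ι × ι) k :=
  fun p q => A (p.1, p.2.1) (q.1, q.2.1) * (if p.2.2 = q.2.2 then 1 else 0)

/-- `A` acting in the 1st and 3rd tensor factors of the threefold tensor power. -/
def lift13 {k : Type*} [Field k] {ι : Type*} [DecidableEq ι]
    (A : Matrix (ι × ι) (ι × ι) k) : Matrix (ι × ι × ι) (ι × ι × ι) k :=
  fun p q => A (p.1, p.2.2) (q.1, q.2.2) * (if p.2.1 = q.2.1 then 1 else 0)

/-- `A` acting in the 2nd and 3rd tensor factors of the threefold tensor power. -/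
def lift23 {k : Type*} [Field k] {ι : Type*} [DecidableEq ι]
    (A : Matrix (ι × ι) (ι × ι) k) : Matrix (ι × ι × ι) (ι × ι × ι) k :=
  fun p q => A (p.2.1, p.2.2) (q.2.1, q.2.2) * (if p.1 = q.1 then 1 else 0)

/-- The quantum Yang–Baxter equation `R₁₂R₁₃R₂₃ = R₂₃R₁₃R₁₂`. -/
def QYBE {k : Type*} [Field k] {ι : Type*} [DecidableEq ι] [Fintype ι]
    (R : Matrix (ι × ι) (ι × ι) k) : Prop :=
  lift12 R * lift13 R * lift23 R = lift23 R * lift13 R * lift12 R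

/-- The multi-index braiding matrix `𝐑^A_I{}^B_J = R^{j₀}_{b₀}{}^{i₀}_{a₀} ·
R^{a₁}_{i₁}{}^{b₁}_{j₁}`, rows indexed by `(A,B)`, columns by `(I,J)`,
where `R^i_j{}^k_l = R (i,k) (j,l)`. -/
def bigR {k : Type*} [Field k] {n : ℕ}
    (R : Matrix (Fin n × Fin n) (Fin n × Fin n) k) :
    Matrix ((Fin n × Fin n) × (Fin n × Fin n)) ((Fin n × Fin n) × (Fin n × Fin n)) k :=
  fun p q => R (q.2.1, q.1.1) (p.2.1, p.1.1) * R (p.1.2, p.2.2) (q.1.2, q.2.2)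

/- ### Auxiliary material -/

open Kronecker

section Aux

variable {k : Type*} [Field k] {ι : Type*} [DecidableEq ι]

/-- Reversal of the three tensor factors. -/
def revE {ι : Type*} : ι × ι × ι ≃ ι × ι × ι where
  toFun p := (p.2.2, p.2.1, p.1)
  invFun p := (p.2.2, p.2.1, p.1)
  left_inv p := rfl
  right_inv p := rfl

/-- Regrouping of three pairs into a pair of triples. -/
def regroup3 {ι : Type*} : (ι × ι) × (ι × ι) × (ι × ι) ≃ (ι × ι × ι) × (ι × ι × ι) where
  toFun p := ((p.1.1, p.2.1.1, p.2.2.1), (p.1.2, p.2.1.2, p.2.2.2))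
  invFun p := ((p.1.1, p.2.1), (p.1.2.1, p.2.2.1), (p.1.2.2, p.2.2.2))
  left_inv p := rfl
  right_inv p := rfl

/-- The regrouping equivalence on pairs of pairs. -/
def regroup2 {ι : Type*} : (ι × ι) × (ι × ι) ≃ (ι × ι) × (ι × ι) where
  toFun p := ((p.1.1, p.2.1), (p.1.2, p.2.2))
  invFun p := ((p.1.1, p.2.1), (p.1.2, p.2.2))
  left_inv p := rfl
  right_inv p := rfl

lemma lift12_transpose (A : Matrix (ι × ι) (ι × ι) k) : lift12 Aᵀ = (lift12 A)ᵀ := by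
  ext p q
  simp only [lift12, Matrix.transpose_apply]
  congr 1
  exact if_congr eq_comm rfl rfl

lemma lift13_transpose (A : Matrix (ι × ι) (ι × ι) k) : lift13 Aᵀ = (lift13 A)ᵀ := by
  ext p q
  simp only [lift13, Matrix.transpose_apply]
  congr 1
  exact if_congr eq_comm rfl rfl

lemma lift23_transpose (A : Matrix (ι × ι) (ι × ι) k) : lift23 Aᵀ = (lift23 A)ᵀ := by
  ext p q
  simp only [lift23, Matrix.transpose_apply]
  congr 1
  exact if_congr eq_comm rfl rfl

lemma lift12_swap (A : Matrix (ι × ι) (ι × ι) k) :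
    lift12 (A.submatrix (Equiv.prodComm ι ι) (Equiv.prodComm ι ι)) =
      (lift23 A).submatrix (revE (ι := ι)) (revE (ι := ι)) := by
  ext p q; rfl

lemma lift13_swap (A : Matrix (ι × ι) (ι × ι) k) :
    lift13 (A.submatrix (Equiv.prodComm ι ι) (Equiv.prodComm ι ι)) =
      (lift13 A).submatrix (revE (ι := ι)) (revE (ι := ι)) := by
  ext p q; rfl

lemma lift23_swap (A : Matrix (ι × ι) (ι × ι) k) :
    lift23 (A.submatrix (Equiv.prodComm ι ι) (Equiv.prodComm ι ι)) =
      (lift12 A).submatrix (revE (ι := ι)) (revE (ι := ι)) := by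
  ext p q; rfl

variable [Fintype ι]

lemma QYBE_transpose {R : Matrix (ι × ι) (ι × ι) k} (h : QYBE R) : QYBE Rᵀ := by
  unfold QYBE at h ⊢
  have h' := congrArg Matrix.transpose h
  simp only [Matrix.transpose_mul] at h'
  rw [lift12_transpose, lift13_transpose, lift23_transpose, Matrix.mul_assoc, Matrix.mul_assoc]
  exact h'.symm

lemma QYBE_swap {R : Matrix (ι × ι) (ι × ι) k} (h : QYBE R) :
    QYBE (R.submatrix (Equiv.prodComm ι ι) (Equiv.prodComm ι ι)) := by
  unfold QYBE at h ⊢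
  rw [lift12_swap, lift13_swap, lift23_swap,
    Matrix.submatrix_mul_equiv _ _ _ (revE (ι := ι)) _,
    Matrix.submatrix_mul_equiv _ _ _ (revE (ι := ι)) _,
    Matrix.submatrix_mul_equiv _ _ _ (revE (ι := ι)) _,
    Matrix.submatrix_mul_equiv _ _ _ (revE (ι := ι)) _]
  exact congrArg (fun M => M.submatrix (revE (ι := ι)) (revE (ι := ι))) h.symm

lemma lift12_kron (A B : Matrix (ι × ι) (ι × ι) k) :
    lift12 ((A ⊗ₖ B).submatrix (regroup2 (ι := ι)) (regroup2 (ι := ι))) =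
      ((lift12 A) ⊗ₖ (lift12 B)).submatrix (regroup3 (ι := ι)) (regroup3 (ι := ι)) := by
  ext p q
  simp only [lift12, Matrix.submatrix_apply, Matrix.kroneckerMap_apply,
    regroup2, regroup3, Equiv.coe_fn_mk]
  have : (p.2.2 = q.2.2) ↔ (p.2.2.1 = q.2.2.1 ∧ p.2.2.2 = q.2.2.2) := Prod.ext_iff
  rw [if_congr this rfl rfl, ite_and]
  split_ifs <;> ring

lemma lift13_kron (A B : Matrix (ι × ι) (ι × ι) k) :
    lift13 ((A ⊗ₖ B).submatrix (regroup2 (ι := ι)) (regroup2 (ι := ι))) =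
      ((lift13 A) ⊗ₖ (lift13 B)).submatrix (regroup3 (ι := ι)) (regroup3 (ι := ι)) := by
  ext p q
  simp only [lift13, Matrix.submatrix_apply, Matrix.kroneckerMap_apply,
    regroup2, regroup3, Equiv.coe_fn_mk]
  have : (p.2.1 = q.2.1) ↔ (p.2.1.1 = q.2.1.1 ∧ p.2.1.2 = q.2.1.2) := Prod.ext_iff
  rw [if_congr this rfl rfl, ite_and]
  split_ifs <;> ring

lemma lift23_kron (A B : Matrix (ι × ι) (ι × ι) k) :
    lift23 ((A ⊗ₖ B).submatrix (regroup2 (ι := ι)) (regroup2 (ι := ι))) =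
      ((lift23 A) ⊗ₖ (lift23 B)).submatrix (regroup3 (ι := ι)) (regroup3 (ι := ι)) := by
  ext p q
  simp only [lift23, Matrix.submatrix_apply, Matrix.kroneckerMap_apply,
    regroup2, regroup3, Equiv.coe_fn_mk]
  have : (p.1 = q.1) ↔ (p.1.1 = q.1.1 ∧ p.1.2 = q.1.2) := Prod.ext_iff
  rw [if_congr this rfl rfl, ite_and]
  split_ifs <;> ring

/-- If two matrices satisfy the QYBE, so does their (regrouped) Kronecker product. -/
lemma QYBE_kron {A B : Matrix (ι × ι) (ι × ι) k} (hA : QYBE A) (hB : QYBE B) :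
    QYBE ((A ⊗ₖ B).submatrix (regroup2 (ι := ι)) (regroup2 (ι := ι))) := by
  unfold QYBE at hA hB ⊢
  rw [lift12_kron, lift13_kron, lift23_kron,
    Matrix.submatrix_mul_equiv _ _ _ (regroup3 (ι := ι)) _,
    Matrix.submatrix_mul_equiv _ _ _ (regroup3 (ι := ι)) _,
    Matrix.submatrix_mul_equiv _ _ _ (regroup3 (ι := ι)) _,
    Matrix.submatrix_mul_equiv _ _ _ (regroup3 (ι := ι)) _,
    ← Matrix.mul_kronecker_mul, ← Matrix.mul_kronecker_mul,
    ← Matrix.mul_kronecker_mul, ← Matrix.mul_kronecker_mul, hA, hB]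

end Aux

/-- If `R` satisfies the QYBE then so does the multi-index braiding matrix `𝐑`. -/
theorem bigR_QYBE
    {k : Type*} [Field k] {n : ℕ}
    (R : Matrix (Fin n × Fin n) (Fin n × Fin n) k)
    (hQYBE : QYBE R) :
    QYBE (bigR R) := by
  set S := (Rᵀ).submatrix (Equiv.prodComm (Fin n) (Fin n)) (Equiv.prodComm (Fin n) (Fin n)) with hSdef
  have hS : QYBE S := QYBE_swap (QYBE_transpose hQYBE)
  have hfac : bigR R = (S ⊗ₖ R).submatrix (regroup2 (ι := Fin n)) (regroup2 (ι := Fin n)) := by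
    ext p q; rfl
  rw [hfac]
  exact QYBE_kron hS hQYBE
end

section
/- Let R be an n²×n² matrix over a field k satisfying the quantum Yang–Baxter equation, invertible, and with invertible second-transpose-inverse R̃ := ((R^{t₂})⁻¹)^{t₂}. Let B be an associative unital k-algebra containing an n×n matrix t = (t^i_j) satisfying the FRT relations for R, and an n×n matrix d = (d^i_j) satisfying d₁d₂R = Rd₂d₁ (i.e. Σ_{a,b} d^i_a d^j_b R^a_m{}^b_n = Σ_{a,b} R^i_a{}^j_b d^b_n d^a_m for all indices), together with the braided Heisenberg–Weyl cross relations: d^{i₁}_{i₀} t^{j₀}_{j₁} − Σ_{a,b,c,e} R^a_{i₀}{}^{j₀}_b · t^b_c · R^c_{j₁}{}^{i₁}_e · d^e_a = δ^{i₁}_{j₁} δ^{j₀}_{i₀} for all indices. Define D^{i₁}_{i₀} := Σ_a t^a_{i₀} d^{i₁}_a. Then for all multi-indices I = (i₀,i₁), J = (j₀,j₁): D^I D^J − Σ_{A,B} Ψ'^I_A{}^J_B D^B D^A = D^{j₁}_{i₀} δ^{i₁}_{j₀} − Σ_{A,B} Ψ'^I_A{}^J_B D^{a₁}_{b₀} δ^{b₁}_{a₀},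 where Ψ'^I_K{}^J_L := Σ_{a,b,c,e} (R⁻¹)^{l₀}_e{}^c_{i₀} · R^e_{j₀}{}^{i₁}_a · R^a_{k₁}{}^{j₁}_b · R̃^{k₀}_c{}^b_{l₁}. (This is Proposition 3.4: the left-invariant vector fields on A(R) close under a braided-Lie-algebra-type bracket with relation matrix Ψ' of the braided matrices B(R₂₁).) -/
/-!
With `D = t d`, the cross relations and `d₁ d₂ R = R d₂ d₁` move `d` past `D`, giving
`D_I D_J = δ D + R R (t D d)`. The cross relations and the FRT relations likewise give
`D t - δ t = M (t D)` for a matrix `M` on index triples built from `R₁₂` and `(R^{t₂})₂₃`, so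
`R⁻¹` and `R̃` invert it and express `t D` through `D t`. Multiplying on the right by `d` then
turns `t D d` into a combination of `D D` and `D`, whose coefficients assemble into `Ψ'`.
-/

open Matrix

/-- Transposition in the second tensor factor: `(M^{t₂})^i_j{}^k_l = M^i_j{}^l_k`,
with the convention `M^i_j{}^k_l = M (i,k) (j,l)`. -/
def t2 {k : Type*} [Field k] {ι : Type*}
    (M : Matrix (ι × ι) (ι × ι) k) : Matrix (ι × ι) (ι × ι) k :=
  fun p q => M (p.1, q.2) (q.1, p.2)

/-- An `ι × ι` matrix `t` of elements of an algebra `B` satisfies the FRT relations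
`R t₁ t₂ = t₂ t₁ R` for `R`, where we write `R^i_j{}^k_l = R (i,k) (j,l)`. -/
def FRT {k : Type*} [Field k] {B : Type*} [Ring B] [Algebra k B]
    {ι : Type*} [Fintype ι]
    (R : Matrix (ι × ι) (ι × ι) k) (t : ι → ι → B) : Prop :=
  ∀ i j m l : ι,
    (∑ a, ∑ b, R (i, j) (a, b) • (t a m * t b l)) =
    (∑ a, ∑ b, R (a, b) (m, l) • (t j b * t i a))

/-- The braided-matrix relation coefficients
`Ψ'^I_K{}^J_L = Σ (R⁻¹)^{l₀}_e{}^c_{i₀} · R^e_{j₀}{}^{i₁}_a · R^a_{k₁}{}^{j₁}_b · R̃^{k₀}_c{}^b_{l₁}`,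
with `I = (i₀,i₁)` etc and `R^i_j{}^k_l = R (i,k) (j,l)`. -/
def Psi' {k : Type*} [Field k] {n : ℕ}
    (R Rinv Rtilde : Matrix (Fin n × Fin n) (Fin n × Fin n) k)
    (I K J L : Fin n × Fin n) : k :=
  ∑ a, ∑ b, ∑ c, ∑ e,
    Rinv (L.1, c) (e, I.1) * R (e, I.2) (J.1, a) *
      R (a, J.2) (K.2, b) * Rtilde (K.1, b) (c, L.2)

open Finset

section TensorLifts

variable {k : Type*} [Field k] {ι : Type*} [DecidableEq ι]

theorem lift12_mul [Fintype ι] (A A' : Matrix (ι × ι) (ι × ι) k) :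
    lift12 (A * A') = lift12 A * lift12 A' := by
  ext ⟨p₁, p₂, p₃⟩ ⟨q₁, q₂, q₃⟩
  simp [lift12, Matrix.mul_apply, Fintype.sum_prod_type]

theorem lift23_mul [Fintype ι] (A A' : Matrix (ι × ι) (ι × ι) k) :
    lift23 (A * A') = lift23 A * lift23 A' := by
  ext ⟨p₁, p₂, p₃⟩ ⟨q₁, q₂, q₃⟩
  simp [lift23, Matrix.mul_apply, Fintype.sum_prod_type]

theorem lift12_one : lift12 (1 : Matrix (ι × ι) (ι × ι) k) = 1 := by
  ext ⟨p₁, p₂, p₃⟩ ⟨q₁, q₂, q₃⟩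
  simp only [lift12, Matrix.one_apply, Prod.mk.injEq]
  split_ifs <;> simp_all

theorem lift23_one : lift23 (1 : Matrix (ι × ι) (ι × ι) k) = 1 := by
  ext ⟨p₁, p₂, p₃⟩ ⟨q₁, q₂, q₃⟩
  simp only [lift23, Matrix.one_apply, Prod.mk.injEq]
  split_ifs <;> simp_all

theorem lift12_mul_lift23_apply [Fintype ι] (A A' : Matrix (ι × ι) (ι × ι) k)
    (x y : ι × ι × ι) :
    (lift12 A * lift23 A') x y = ∑ e, A (x.1, x.2.1) (y.1, e) * A' (e, x.2.2) y.2 := by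
  simp [lift12, lift23, Matrix.mul_apply, Fintype.sum_prod_type]

theorem lift23_mul_lift12_apply [Fintype ι] (A A' : Matrix (ι × ι) (ι × ι) k)
    (x y : ι × ι × ι) :
    (lift23 A * lift12 A') x y = ∑ e, A x.2 (e, y.2.2) * A' (x.1, e) (y.1, y.2.1) := by
  simp [lift12, lift23, Matrix.mul_apply, Fintype.sum_prod_type]

end TensorLifts

theorem eq_sum_smul_of_mul_eq_one {κ k V : Type*} [Fintype κ] [DecidableEq κ] [CommSemiring k]
    [AddCommMonoid V] [Module k V] {M N : Matrix κ κ k} (hMN : M * N = 1) {U W : κ → V}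
    (h : ∀ u, U u = ∑ v, M v u • W v) (v : κ) : W v = ∑ u, N u v • U u := by
  simp_rw [h, smul_sum, smul_smul]
  rw [sum_comm]
  simp_rw [← sum_smul, mul_comm (N _ v), ← Matrix.mul_apply, hMN, Matrix.one_apply, ite_smul,
    one_smul, zero_smul]
  simp

def WeylCrossRelations {k B ι : Type*} [Field k] [Ring B] [Algebra k B] [Fintype ι]
    [DecidableEq ι] (R : Matrix (ι × ι) (ι × ι) k) (t d : ι → ι → B) : Prop :=
  ∀ i₀ i₁ j₀ j₁ : ι,
    d i₁ i₀ * t j₀ j₁ -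
      (∑ a, ∑ b, ∑ c, ∑ e, (R (a, j₀) (i₀, b) * R (c, i₁) (j₁, e)) • (t b c * d e a)) =
    if i₁ = j₁ ∧ j₀ = i₀ then 1 else 0

section LeftInvariantVectorFields

variable {k : Type*} [Field k] {B : Type*} [Ring B] [Algebra k B] {ι : Type*} [Fintype ι]
  [DecidableEq ι] {R : Matrix (ι × ι) (ι × ι) k} {t d D : ι → ι → B}

theorem d_mul_D_sub_ite
    (hd : ∀ i j m p : ι,
      (∑ a, ∑ b, R (a, b) (m, p) • (d i a * d j b)) =
      (∑ a, ∑ b, R (i, j) (a, b) • (d b p * d a m)))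
    (hweyl : WeylCrossRelations R t d) (hD : ∀ u l, D u l = ∑ a, t a l * d u a)
    (i₁ i₀ j₁ j₀ : ι) :
    d i₁ i₀ * D j₁ j₀ - (if i₁ = j₀ then d j₁ i₀ else 0) =
      ∑ c, ∑ e, ∑ α, ∑ β, (R (c, i₁) (j₀, e) * R (e, j₁) (α, β)) • (D β c * d α i₀) := by
  have hw (a : ι) : d i₁ i₀ * t a j₀ - (if i₁ = j₀ ∧ a = i₀ then 1 else 0) =
      ∑ p, ∑ b, ∑ c, ∑ e, (R (p, a) (i₀, b) * R (c, i₁) (j₀, e)) • (t b c * d e p) := by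
    rw [← hweyl i₀ i₁ a j₀, sub_sub_cancel]
  calc d i₁ i₀ * D j₁ j₀ - (if i₁ = j₀ then d j₁ i₀ else 0)
      = ∑ a, (d i₁ i₀ * t a j₀ - if i₁ = j₀ ∧ a = i₀ then 1 else 0) * d j₁ a := by
        simp [hD, mul_sum, sub_mul, sum_sub_distrib, mul_assoc, ite_and]
    _ = ∑ b, ∑ c, ∑ e, R (c, i₁) (j₀, e) •
          (t b c * ∑ p, ∑ a, R (p, a) (i₀, b) • (d e p * d j₁ a)) := by
        simp only [hw, sum_mul, mul_sum, smul_sum, smul_mul_assoc, mul_smul_comm, smul_smul,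
          mul_assoc, ← Fintype.sum_prod_type']
        exact Fintype.sum_equiv ⟨fun ⟨a, p, b, c, e⟩ => (b, c, e, p, a),
          fun ⟨b, c, e, p, a⟩ => (a, p, b, c, e), fun _ => rfl, fun _ => rfl⟩ _ _
          fun _ => by rw [mul_comm (R _ _)]; rfl
    _ = ∑ b, ∑ c, ∑ e, R (c, i₁) (j₀, e) •
          (t b c * ∑ α, ∑ β, R (e, j₁) (α, β) • (d β b * d α i₀)) := by
        simp only [hd]
    _ = _ := by
        simp only [hD, sum_mul, mul_sum, mul_smul_comm, smul_smul, mul_assoc, smul_sum,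
          ← Fintype.sum_prod_type']
        exact Fintype.sum_equiv ⟨fun ⟨b, c, e, α, β⟩ => (c, e, α, β, b),
          fun ⟨c, e, α, β, b⟩ => (b, c, e, α, β), fun _ => rfl, fun _ => rfl⟩ _ _ fun _ => rfl

theorem D_mul_D_sub_ite
    (hd : ∀ i j m p : ι,
      (∑ a, ∑ b, R (a, b) (m, p) • (d i a * d j b)) =
      (∑ a, ∑ b, R (i, j) (a, b) • (d b p * d a m)))
    (hweyl : WeylCrossRelations R t d) (hD : ∀ u l, D u l = ∑ a, t a l * d u a)
    (i₁ i₀ j₁ j₀ : ι) :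
    D i₁ i₀ * D j₁ j₀ - (if i₁ = j₀ then D j₁ i₀ else 0) =
      ∑ c, ∑ e, ∑ α, ∑ β, (R (c, i₁) (j₀, e) * R (e, j₁) (α, β)) •
        ∑ w, t w i₀ * (D β c * d α w) := by
  calc D i₁ i₀ * D j₁ j₀ - (if i₁ = j₀ then D j₁ i₀ else 0)
      = ∑ w, t w i₀ * (d i₁ w * D j₁ j₀ - if i₁ = j₀ then d j₁ w else 0) := by
        rw [hD i₁ i₀, hD j₁ i₀]
        split_ifs <;> simp [sum_mul, mul_sub, mul_assoc]
    _ = ∑ w, t w i₀ * ∑ c, ∑ e, ∑ α, ∑ β,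
          (R (c, i₁) (j₀, e) * R (e, j₁) (α, β)) • (D β c * d α w) := by
        simp only [d_mul_D_sub_ite hd hweyl hD]
    _ = _ := by
        simp only [mul_sum, mul_smul_comm, smul_sum, ← Fintype.sum_prod_type']
        exact Fintype.sum_equiv ⟨fun ⟨w, c, e, α, β⟩ => (c, e, α, β, w),
          fun ⟨c, e, α, β, w⟩ => (w, c, e, α, β), fun _ => rfl, fun _ => rfl⟩ _ _ fun _ => rfl

theorem D_mul_t_sub_ite (ht : FRT R t) (hweyl : WeylCrossRelations R t d)
    (hD : ∀ u l, D u l = ∑ a, t a l * d u a) (i₁ i₀ m j₁ : ι) :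
    D i₁ i₀ * t m j₁ - (if i₁ = j₁ then t m i₀ else 0) =
      ∑ a, ∑ c, ∑ f, ∑ e, (R (a, c) (i₀, e) * R (e, i₁) (j₁, f)) • (t m c * D f a) := by
  have hw (u : ι) : d i₁ u * t m j₁ - (if i₁ = j₁ ∧ m = u then 1 else 0) =
      ∑ a, ∑ b, ∑ c, ∑ e, (R (a, m) (u, b) * R (c, i₁) (j₁, e)) • (t b c * d e a) := by
    rw [← hweyl u i₁ m j₁, sub_sub_cancel]
  calc D i₁ i₀ * t m j₁ - (if i₁ = j₁ then t m i₀ else 0)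
      = ∑ u, t u i₀ * (d i₁ u * t m j₁ - if i₁ = j₁ ∧ m = u then 1 else 0) := by
        rw [hD]
        by_cases h : i₁ = j₁ <;> simp [h, sum_mul, mul_sub, mul_assoc]
    _ = ∑ a, ∑ c, ∑ e, R (c, i₁) (j₁, e) •
          ((∑ u, ∑ b, R (a, m) (u, b) • (t u i₀ * t b c)) * d e a) := by
        simp only [hw, sum_mul, mul_sum, smul_sum, smul_mul_assoc, mul_smul_comm, smul_smul,
          mul_assoc, ← Fintype.sum_prod_type']
        exact Fintype.sum_equiv ⟨fun ⟨u, a, b, c, e⟩ => (a, c, e, u, b),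
          fun ⟨a, c, e, u, b⟩ => (u, a, b, c, e), fun _ => rfl, fun _ => rfl⟩ _ _
          fun _ => by rw [mul_comm (R _ _)]; rfl
    _ = ∑ a, ∑ c, ∑ e, R (c, i₁) (j₁, e) •
          ((∑ p, ∑ q, R (p, q) (i₀, c) • (t m q * t a p)) * d e a) := by
        simp only [(ht · m i₀ ·)]
    _ = _ := by
        simp only [hD, sum_mul, mul_sum, smul_sum, smul_mul_assoc, smul_smul,
          mul_assoc, ← Fintype.sum_prod_type']
        exact Fintype.sum_equiv ⟨fun ⟨a, c, e, p, q⟩ => (p, q, e, c, a),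
          fun ⟨p, q, e, c, a⟩ => (a, c, e, p, q), fun _ => rfl, fun _ => rfl⟩ _ _
          fun _ => by rw [mul_comm (R _ _)]; rfl

theorem t_mul_D_eq {Rinv Rtilde : Matrix (ι × ι) (ι × ι) k} (hinv : R * Rinv = 1)
    (htilde : t2 R * t2 Rtilde = 1) (ht : FRT R t) (hweyl : WeylCrossRelations R t d)
    (hD : ∀ u l, D u l = ∑ a, t a l * d u a) (m c f a : ι) :
    t m c * D f a = ∑ p, ∑ r, ∑ q, ∑ e, (Rtilde (r, f) (e, q) * Rinv (p, e) (a, c)) •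
      (D q p * t m r - if q = r then t m p else 0) := by
  -- On index triples `(i₀, j₁, i₁)`, the coefficients in `D_mul_t_sub_ite` are the entries of
  -- the transpose of `lift12 R * lift23 (t2 R)`.
  have hMN : lift12 R * lift23 (t2 R) * (lift23 (t2 Rtilde) * lift12 Rinv) = 1 := by
    rw [mul_assoc, ← mul_assoc (lift23 _), ← lift23_mul, htilde, lift23_one, one_mul,
      ← lift12_mul, hinv, lift12_one]
  have hinverted := eq_sum_smul_of_mul_eq_one hMN
    (U := fun u => D u.2.2 u.1 * t m u.2.1 - if u.2.2 = u.2.1 then t m u.1 else 0)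
    (W := fun v => t m v.2.1 * D v.2.2 v.1) (fun ⟨p, r, q⟩ => ?_) (a, c, f)
  · simpa [lift23_mul_lift12_apply, Fintype.sum_prod_type, sum_smul, t2] using hinverted
  · simp [lift12_mul_lift23_apply, D_mul_t_sub_ite ht hweyl hD, Fintype.sum_prod_type, sum_smul,
      t2]

theorem sum_t_mul_D_mul_d {Rinv Rtilde : Matrix (ι × ι) (ι × ι) k} (hinv : R * Rinv = 1)
    (htilde : t2 R * t2 Rtilde = 1) (ht : FRT R t) (hweyl : WeylCrossRelations R t d)
    (hD : ∀ u l, D u l = ∑ a, t a l * d u a) (i₀ c α β : ι) :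
    ∑ w, t w i₀ * (D β c * d α w) = ∑ p, ∑ r, ∑ q, ∑ e,
      (Rtilde (r, β) (e, q) * Rinv (p, e) (c, i₀)) •
        (D q p * D α r - if q = r then D α p else 0) := by
  have sum_mul_d (p q r : ι) :
      ∑ w, (D q p * t w r - if q = r then t w p else 0) * d α w =
        D q p * D α r - if q = r then D α p else 0 := by
    by_cases h : q = r <;> simp [h, hD α, sub_mul, mul_sum, mul_assoc]
  calc ∑ w, t w i₀ * (D β c * d α w)
      = ∑ p, ∑ r, ∑ q, ∑ e, (Rtilde (r, β) (e, q) * Rinv (p, e) (c, i₀)) •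
          ∑ w, (D q p * t w r - if q = r then t w p else 0) * d α w := by
        simp only [← mul_assoc, t_mul_D_eq hinv htilde ht hweyl hD, sum_mul, smul_mul_assoc,
          smul_sum, ← Fintype.sum_prod_type']
        exact Fintype.sum_equiv ⟨fun ⟨w, p, r, q, e⟩ => (p, r, q, e, w),
          fun ⟨p, r, q, e, w⟩ => (w, p, r, q, e), fun _ => rfl, fun _ => rfl⟩ _ _ fun _ => rfl
    _ = _ := by simp only [sum_mul_d]

end LeftInvariantVectorFields

theorem sum_Psi'_smul {k V : Type*} [Field k] [AddCommMonoid V] [Module k V] {n : ℕ}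
    (R Rinv Rtilde : Matrix (Fin n × Fin n) (Fin n × Fin n) k)
    (F : Fin n × Fin n → Fin n × Fin n → V) (i₀ i₁ j₀ j₁ : Fin n) :
    ∑ X, ∑ Y, Psi' R Rinv Rtilde (i₀, i₁) X (j₀, j₁) Y • F X Y =
      ∑ c, ∑ e, ∑ α, ∑ β, (R (c, i₁) (j₀, e) * R (e, j₁) (α, β)) •
        ∑ p, ∑ r, ∑ q, ∑ e', (Rtilde (r, β) (e', q) * Rinv (p, e') (c, i₀)) •
          F (r, α) (p, q) := by
  simp only [Psi', Fintype.sum_prod_type, sum_smul, smul_sum, smul_smul]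
  simp only [← Fintype.sum_prod_type']
  exact Fintype.sum_equiv
    ⟨fun ⟨x₀, x₁, y₀, y₁, a, b, c, e⟩ => (e, a, x₁, b, y₀, x₀, y₁, c),
      fun ⟨e, a, x₁, b, y₀, x₀, y₁, c⟩ => (x₀, x₁, y₀, y₁, a, b, c, e),
      fun _ => rfl, fun _ => rfl⟩ _ _ fun _ => by simp only [Equiv.coe_fn_mk]; congr 1; ring

theorem left_invariant_vector_fields_relations_general
    {k : Type*} [Field k] {B : Type*} [Ring B] [Algebra k B] {n : ℕ}
    (R Rinv Rtilde : Matrix (Fin n × Fin n) (Fin n × Fin n) k)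
    (hinv : R * Rinv = 1)
    (htilde : t2 R * t2 Rtilde = 1)
    (t d : Fin n → Fin n → B)
    (ht : FRT R t)
    (hd : ∀ i j m p : Fin n,
      (∑ a, ∑ b, R (a, b) (m, p) • (d i a * d j b)) =
      (∑ a, ∑ b, R (i, j) (a, b) • (d b p * d a m)))
    (hweyl : ∀ i₀ i₁ j₀ j₁ : Fin n,
      d i₁ i₀ * t j₀ j₁ -
        (∑ a, ∑ b, ∑ c, ∑ e,
          (R (a, j₀) (i₀, b) * R (c, i₁) (j₁, e)) • (t b c * d e a)) =
      if i₁ = j₁ ∧ j₀ = i₀ then 1 else 0)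
    (D : Fin n → Fin n → B)
    (hD : ∀ u l, D u l = ∑ a, t a l * d u a) :
    ∀ I J : Fin n × Fin n,
      D I.2 I.1 * D J.2 J.1 -
        (∑ X : Fin n × Fin n, ∑ Y : Fin n × Fin n,
          Psi' R Rinv Rtilde I X J Y • (D Y.2 Y.1 * D X.2 X.1)) =
      (if I.2 = J.1 then D J.2 I.1 else 0) -
        (∑ X : Fin n × Fin n, ∑ Y : Fin n × Fin n,
          Psi' R Rinv Rtilde I X J Y • (if Y.2 = X.1 then D X.2 Y.1 else 0)) := by
  rintro ⟨i₀, i₁⟩ ⟨j₀, j₁⟩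
  rw [sub_eq_sub_iff_sub_eq_sub]
  simp only [← sum_sub_distrib, ← smul_sub]
  rw [sum_Psi'_smul, D_mul_D_sub_ite hd hweyl hD]
  simp only [sum_t_mul_D_mul_d hinv htilde ht hweyl hD]

/-- **Proposition 3.4.** The left-invariant vector fields `D^{i₁}_{i₀} = Σ_a t^a_{i₀} d^{i₁}_a`
inside the braided Heisenberg–Weyl algebra close under the braided-Lie-algebra-type
relations with relation matrix `Ψ'`. -/
theorem left_invariant_vector_fields_relations
    {k : Type*} [Field k] {B : Type*} [Ring B] [Algebra k B] {n : ℕ}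
    (R Rinv Rtilde : Matrix (Fin n × Fin n) (Fin n × Fin n) k)
    (hQYBE : QYBE R)
    (hinv : R * Rinv = 1) (hinv' : Rinv * R = 1)
    (htilde : t2 R * t2 Rtilde = 1) (htilde' : t2 Rtilde * t2 R = 1)
    (t d : Fin n → Fin n → B)
    (ht : FRT R t)
    (hd : ∀ i j m p : Fin n,
      (∑ a, ∑ b, R (a, b) (m, p) • (d i a * d j b)) =
      (∑ a, ∑ b, R (i, j) (a, b) • (d b p * d a m)))
    (hweyl : ∀ i₀ i₁ j₀ j₁ : Fin n,
      d i₁ i₀ * t j₀ j₁ -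
        (∑ a, ∑ b, ∑ c, ∑ e,
          (R (a, j₀) (i₀, b) * R (c, i₁) (j₁, e)) • (t b c * d e a)) =
      if i₁ = j₁ ∧ j₀ = i₀ then 1 else 0)
    (D : Fin n → Fin n → B)
    (hD : ∀ u l, D u l = ∑ a, t a l * d u a) :
    ∀ I J : Fin n × Fin n,
      D I.2 I.1 * D J.2 J.1 -
        (∑ X : Fin n × Fin n, ∑ Y : Fin n × Fin n,
          Psi' R Rinv Rtilde I X J Y • (D Y.2 Y.1 * D X.2 X.1)) =
      (if I.2 = J.1 then D J.2 I.1 else 0) -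
        (∑ X : Fin n × Fin n, ∑ Y : Fin n × Fin n,
          Psi' R Rinv Rtilde I X J Y • (if Y.2 = X.1 then D X.2 Y.1 else 0)) :=
  left_invariant_vector_fields_relations_general R Rinv Rtilde hinv htilde t d ht hd hweyl D hD
end
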